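/- Let X be a separable Banach space and let A be a weak*-compact subset of X* such that [σ^{ω^n}]^m_ε(A) = ∅ for some integers n ≥ 0, m ≥ 1 and some ε > 0 (where σ^{ω^0} := σ). Then there exists a symmetric (B = −B) and radial (λx* ∈ B for every x* ∈ B and λ ∈ [0,1]) weak*-compact set B ⊆ X* containing A such that [σ^{ω^n}]'_{4ε}(B) ⊆ (1 − 1/(32(m+1))) B. -/

import Mathlib

open Filter Topology Set Pointwise

noncomputable section

namespace Szlenk

variable {E : Type*}

/-- The fragment derivation `[η]'_ε(A)` associated to a set function `η`:
the points of `A` all of whose neighborhoods `U` satisfy `η (A ∩ cl U) ≥ ε`. -/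
def frag [TopologicalSpace E] (η : Set E → ℝ) (ε : ℝ) (A : Set E) : Set E :=
  {x | x ∈ A ∧ ∀ U ∈ 𝓝 x, ε ≤ η (A ∩ closure U)}

/-- Transfinite iterates `[η]^γ_ε(A)` of the fragment derivation. -/
def fragIter [TopologicalSpace E] (η : Set E → ℝ) (ε : ℝ) (A : Set E) (γ : Ordinal.{0}) :
    Set E :=
  Ordinal.limitRecOn γ A (fun _ S => frag η ε S)
    (fun γ _ ih => ⋂ β : {β : Ordinal.{0} // β < γ}, ih β.1 β.2)

/-- The `ω`-iterated measure `η^ω (A) = inf {ε > 0 : [η]^ω_ε(A) = ∅}`. -/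
def etaOmega [TopologicalSpace E] (η : Set E → ℝ) (A : Set E) : ℝ :=
  sInf {ε : ℝ | 0 < ε ∧ fragIter η ε A Ordinal.omega0 = ∅}

/-- The iterates `η^{ω^n}` (with `η^{ω^0} := η` and `η^{ω^{n+1}} := (η^{ω^n})^ω`). -/
def omegaPow [TopologicalSpace E] (η : Set E → ℝ) : ℕ → Set E → ℝ
  | 0 => η
  | n + 1 => etaOmega (omegaPow η n)

/-- `η` is a measure of non compactness (with respect to the closed unit ball `ball`):
it is nonnegative, vanishes on singletons, is monotone, satisfies
`η (A ∪ B) = max (η A) (η B)`, and `η (A + l • ball) ≤ η A + l * b` for some `b > 0`.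
All conditions are required on (weak*-)compact sets only. -/
structure IsMNCOn [TopologicalSpace E] [AddCommGroup E] [Module ℝ E]
    (ball : Set E) (η : Set E → ℝ) : Prop where
  nonneg : ∀ A : Set E, IsCompact A → 0 ≤ η A
  singleton : ∀ x : E, η {x} = 0
  mono : ∀ A B : Set E, IsCompact A → IsCompact B → A ⊆ B → η A ≤ η B
  union : ∀ A B : Set E, IsCompact A → IsCompact B → η (A ∪ B) = max (η A) (η B)
  ball_add : ∃ b > 0, ∀ A : Set E, IsCompact A → ∀ l : ℝ, 0 < l →
    η (A + l • ball) ≤ η A + l * b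

/-- `η` is a measure of non compactness with the explicit constant `b` in property (iii). -/
structure IsMNCWith [TopologicalSpace E] [AddCommGroup E] [Module ℝ E]
    (ball : Set E) (b : ℝ) (η : Set E → ℝ) : Prop where
  b_pos : 0 < b
  nonneg : ∀ A : Set E, IsCompact A → 0 ≤ η A
  singleton : ∀ x : E, η {x} = 0
  mono : ∀ A B : Set E, IsCompact A → IsCompact B → A ⊆ B → η A ≤ η B
  union : ∀ A B : Set E, IsCompact A → IsCompact B → η (A ∪ B) = max (η A) (η B)
  ball_add : ∀ A : Set E, IsCompact A → ∀ l : ℝ, 0 < l →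
    η (A + l • ball) ≤ η A + l * b

/-- A sublinear measure of non compactness: homogeneous and subadditive. -/
structure IsSublinear [TopologicalSpace E] [AddCommGroup E] [Module ℝ E]
    (η : Set E → ℝ) : Prop where
  homog : ∀ (l : ℝ) (A : Set E), IsCompact A → η (l • A) = |l| * η A
  subadd : ∀ A B : Set E, IsCompact A → IsCompact B → η (A + B) ≤ η A + η B

variable {X : Type*} [NormedAddCommGroup X] [NormedSpace ℝ X]

/-- The dual norm on `X*` (the dual being equipped with its weak* topology). -/
def dnorm (f : WeakDual ℝ X) : ℝ := ‖WeakDual.toStrongDual f‖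

/-- The closed unit ball of `X*`. -/
def dualBall (X : Type*) [NormedAddCommGroup X] [NormedSpace ℝ X] :
    Set (WeakDual ℝ X) := {f | dnorm f ≤ 1}

/-- The slice derivation `⟨η⟩'_ε(A)`: the points of `A` such that every weak*-closed
halfspace containing them meets `A` in a set of `η`-measure at least `ε`. -/
def sliceD (η : Set (WeakDual ℝ X) → ℝ) (ε : ℝ) (A : Set (WeakDual ℝ X)) :
    Set (WeakDual ℝ X) :=
  {x | x ∈ A ∧ ∀ (f : X) (c : ℝ), c ≤ x f → ε ≤ η (A ∩ {y | c ≤ y f})}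

/-- Transfinite iterates `⟨η⟩^γ_ε(A)` of the slice derivation. -/
def sliceIter (η : Set (WeakDual ℝ X) → ℝ) (ε : ℝ) (A : Set (WeakDual ℝ X))
    (γ : Ordinal.{0}) : Set (WeakDual ℝ X) :=
  Ordinal.limitRecOn γ A (fun _ S => sliceD η ε S)
    (fun γ _ ih => ⋂ β : {β : Ordinal.{0} // β < γ}, ih β.1 β.2)

/-- A weak*-closed halfspace of `X*`. -/
def IsHalfspace (H : Set (WeakDual ℝ X)) : Prop :=
  ∃ (f : X) (c : ℝ), H = {y : WeakDual ℝ X | c ≤ y f}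

/-- The Kuratowski measure of non compactness associated to a (dual) norm `Nd`:
the infimum of all `ε > 0` such that `A` can be covered by finitely many balls of
diameter `ε` (i.e. of radius `ε / 2`). -/
def kurN (Nd : WeakDual ℝ X → ℝ) (A : Set (WeakDual ℝ X)) : ℝ :=
  sInf {ε : ℝ | 0 < ε ∧
    ∃ F : Finset (WeakDual ℝ X), A ⊆ ⋃ c ∈ F, {y | Nd (y - c) ≤ ε / 2}}

/-- The Kuratowski measure of non compactness on `X*`. -/
def kur (A : Set (WeakDual ℝ X)) : ℝ := kurN dnorm A

/-- The iterated sets `A^ε_β` of the convex Szlenk derivation: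
`A^ε_{β+1}` is the weak*-closed convex hull of `[σ]'_ε(A^ε_β)`. -/
def convIter (ε : ℝ) (K : Set (WeakDual ℝ X)) (γ : Ordinal.{0}) : Set (WeakDual ℝ X) :=
  Ordinal.limitRecOn γ K (fun _ S => closure (convexHull ℝ (frag kur ε S)))
    (fun γ _ ih => ⋂ β : {β : Ordinal.{0} // β < γ}, ih β.1 β.2)

/-- The families `𝒯_α` of trees on `ℕ`. A tree is a set of finite sequences of
naturals (closed under initial segments); the root is the empty sequence, and
`(n)⌢s` is represented by `n :: s`. `𝒯_0 = {{∅}}`, and `T ∈ 𝒯_α` for `α ≥ 1` if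
`T = {∅} ∪ ⋃_k (n_k)⌢T_k` with `n_k` strictly increasing, `T_k ∈ 𝒯_{α_k}`, where
`α_k = β` for all `k` if `α = β + 1`, and `α_k ↗ α` if `α` is a limit ordinal. -/
inductive IsTreeFam : Ordinal.{0} → Set (List ℕ) → Prop
  | zero : IsTreeFam 0 {[]}
  | node {α : Ordinal.{0}} (nk : ℕ → ℕ) (αk : ℕ → Ordinal.{0}) (Tk : ℕ → Set (List ℕ))
      (hnk : StrictMono nk) (hTk : ∀ k, IsTreeFam (αk k) (Tk k))
      (hα : (∃ β, α = β + 1 ∧ ∀ k, αk k = β) ∨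
            (Order.IsSuccLimit α ∧ StrictMono αk ∧ α = ⨆ k, αk k)) :
      IsTreeFam α ({[]} ∪ ⋃ k, (List.cons (nk k)) '' Tk k)

/-- A family `(x_s)_{s ∈ T}` is weak*-continuous: `x_{s⌢n} → x_s` (in the ambient,
i.e. weak*, topology) along the children of every node `s` of `T`. -/
def IsContFam [TopologicalSpace E] (T : Set (List ℕ)) (x : List ℕ → E) : Prop :=
  ∀ s ∈ T, Tendsto (fun n : ℕ => x (s ++ [n]))
    (atTop ⊓ 𝓟 {n : ℕ | s ++ [n] ∈ T}) (𝓝 (x s))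

/-- A family `(x_s)_{s ∈ T}` in `X*` is `ε`-separated: `‖x_s - x_{s⌢n}‖ ≥ ε`. -/
def IsSepFam (ε : ℝ) (T : Set (List ℕ)) (x : List ℕ → WeakDual ℝ X) : Prop :=
  ∀ s ∈ T, ∀ n : ℕ, s ++ [n] ∈ T → ε ≤ dnorm (x s - x (s ++ [n]))

/-- Norm distance from a point of `X*` to a subset of `X*`. -/
def ddist (f : WeakDual ℝ X) (A : Set (WeakDual ℝ X)) : ℝ :=
  sInf ((fun g => dnorm (f - g)) '' A)

/-- The product `η₁ × η₂` of two measures of non compactness. -/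
def prodMNC {X₁ X₂ : Type*} [NormedAddCommGroup X₁] [NormedSpace ℝ X₁]
    [NormedAddCommGroup X₂] [NormedSpace ℝ X₂]
    (η₁ : Set (WeakDual ℝ X₁) → ℝ) (η₂ : Set (WeakDual ℝ X₂) → ℝ)
    (A : Set (WeakDual ℝ X₁ × WeakDual ℝ X₂)) : ℝ :=
  sInf {ε : ℝ | 0 < ε ∧ ∃ (n : ℕ) (A₁ : Fin n → Set (WeakDual ℝ X₁))
      (A₂ : Fin n → Set (WeakDual ℝ X₂)),
      (∀ i, IsCompact (A₁ i) ∧ IsCompact (A₂ i) ∧ η₁ (A₁ i) < ε ∧ η₂ (A₂ i) < ε) ∧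
      A ⊆ ⋃ i, A₁ i ×ˢ A₂ i}

/-- The dual norm on `X*` associated to an (equivalent) norm `N` on `X`. -/
def dualNormOf (N : X → ℝ) (f : WeakDual ℝ X) : ℝ :=
  sSup ((fun x => f x) '' {x : X | N x ≤ 1})

/-- The closed unit ball of the dual norm associated to a norm `N` on `X`. -/
def dualBallOf (N : X → ℝ) : Set (WeakDual ℝ X) :=
  {f : WeakDual ℝ X | ∀ x : X, |f x| ≤ N x}

/-!
Write `η = σ^{ω^n}`, `A_j = [η]^j_ε(A)`, `c = 1/(32(m+1))`, `t_j = (1 - c)⁻ʲ ≤ 2` for `j < m`,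
and `B = ⋃_{j<m} [-t_j, t_j] • A_j`, a balanced compact set containing `A = A_0`.
If `x ∈ [η]'_{4ε}(B)` were not in `(1 - c) • B`, then in every representation `x = ν • b` with
`b ∈ A_j` and `|ν| ≤ t_j` we would have `b ∉ A_{j+1}`, since otherwise
`x = (1 - c) • (((1 - c)⁻¹ ν) • b)` with `(1 - c)⁻¹ ν ∈ [-t_{j+1}, t_{j+1}]`. So each such `b` has a
weak*-neighbourhood meeting `A_j` in measure `< ε`; by compactness of the set of these `(ν, b)`,
finitely many of them, scaled by `|ν| ≤ 2` and slightly thickened, cover `B` near `x`, which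
then has measure `< 4ε`.

The argument only uses that `η` is a homogeneous measure of non-compactness
(`IsHomogeneousMNC`), a property of `σ` that passes from `η` to `η^ω`.
-/

section Fragment

variable {E : Type*} [TopologicalSpace E] {η : Set E → ℝ} {ε : ℝ} {S : Set E} {x : E}

lemma frag_subset (η : Set E → ℝ) (ε : ℝ) (S : Set E) : frag η ε S ⊆ S := fun _ hx => hx.1

lemma isClosed_frag (hS : IsClosed S) : IsClosed (frag η ε S) := by
  have hO : IsOpen {x : E | ∃ U ∈ 𝓝 x, η (S ∩ closure U) < ε} :=
    isOpen_iff_mem_nhds.2 fun _ ⟨U, hU, hlt⟩ =>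
      (eventually_mem_nhds_iff.2 hU).mono fun _ hy => ⟨U, hy, hlt⟩
  have h : frag η ε S = S ∩ {x : E | ∃ U ∈ 𝓝 x, η (S ∩ closure U) < ε}ᶜ := by
    ext x
    simp [frag]
  rw [h]
  exact hS.inter hO.isClosed_compl

lemma iterate_frag_antitone (η : Set E → ℝ) (ε : ℝ) (S : Set E) :
    Antitone fun k => (frag η ε)^[k] S :=
  fun _ _ hkl => Function.antitone_iterate_of_le_id (frag_subset η ε) hkl S

lemma isClosed_iterate_frag (hS : IsClosed S) (k : ℕ) : IsClosed ((frag η ε)^[k] S) := by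
  induction k with
  | zero => exact hS
  | succ k ih => rw [Function.iterate_succ_apply']; exact isClosed_frag ih

lemma isCompact_iterate_frag [T2Space E] (hS : IsCompact S) (k : ℕ) :
    IsCompact ((frag η ε)^[k] S) :=
  hS.of_isClosed_subset (isClosed_iterate_frag hS.isClosed k)
    (iterate_frag_antitone η ε S (Nat.zero_le k))

lemma exists_nhds_lt_of_mem_of_notMem_frag (hx : x ∈ S) (h : x ∉ frag η ε S) :
    ∃ U ∈ 𝓝 x, η (S ∩ closure U) < ε := by
  simpa [frag, hx] using h

lemma exists_nhds_lt_of_notMem_frag [RegularSpace E] (hS : IsClosed S) (hε : η ∅ < ε)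
    (h : x ∉ frag η ε S) : ∃ U ∈ 𝓝 x, η (S ∩ closure U) < ε := by
  by_cases hx : x ∈ S
  · exact exists_nhds_lt_of_mem_of_notMem_frag hx h
  obtain ⟨U, hU, hUc, hUS⟩ := exists_mem_nhds_isClosed_subset (hS.isOpen_compl.mem_nhds hx)
  refine ⟨U, hU, ?_⟩
  rwa [hUc.closure_eq, (subset_compl_iff_disjoint_left.1 hUS).inter_eq]

lemma fragIter_natCast (η : Set E → ℝ) (ε : ℝ) (S : Set E) (k : ℕ) :
    fragIter η ε S k = (frag η ε)^[k] S := by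
  induction k with
  | zero => exact Ordinal.limitRecOn_zero _ _ _
  | succ k ih =>
    rw [Nat.cast_succ, Function.iterate_succ_apply', ← ih]
    exact Ordinal.limitRecOn_add_one _ _ _ _

def fragOmega (η : Set E → ℝ) (ε : ℝ) (S : Set E) : Set E := ⋂ k : ℕ, (frag η ε)^[k] S

lemma fragIter_omega0 (η : Set E → ℝ) (ε : ℝ) (S : Set E) :
    fragIter η ε S Ordinal.omega0 = fragOmega η ε S := by
  have h : fragIter η ε S Ordinal.omega0 =
      ⋂ β : {β : Ordinal.{0} // β < Ordinal.omega0}, fragIter η ε S β :=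
    Ordinal.limitRecOn_limit _ _ _ _ Ordinal.isSuccLimit_omega0
  ext x
  rw [h]
  simp only [mem_iInter, fragOmega]
  refine ⟨fun hx k => ?_, fun hx ⟨β, hβ⟩ => ?_⟩
  · simpa only [← fragIter_natCast] using hx ⟨k, Ordinal.natCast_lt_omega0 k⟩
  · obtain ⟨k, rfl⟩ := Ordinal.lt_omega0.1 hβ
    simpa only [← fragIter_natCast] using hx k

lemma etaOmega_le (hε : 0 < ε) (h : fragOmega η ε S = ∅) : etaOmega η S ≤ ε := by
  unfold etaOmega
  exact csInf_le ⟨0, fun _ hδ => hδ.1.le⟩ ⟨hε, by rwa [fragIter_omega0]⟩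

lemma exists_fragOmega_eq_empty_of_etaOmega_lt (hS : ∃ δ, 0 < δ ∧ fragOmega η δ S = ∅)
    {c : ℝ} (h : etaOmega η S < c) : ∃ δ, 0 < δ ∧ δ < c ∧ fragOmega η δ S = ∅ := by
  obtain ⟨δ₀, hδ₀, hS⟩ := hS
  unfold etaOmega at h
  obtain ⟨δ, ⟨hδ, hδS⟩, hδc⟩ := exists_lt_of_csInf_lt
    (show Set.Nonempty {δ | 0 < δ ∧ fragIter η δ S Ordinal.omega0 = ∅} from
      ⟨δ₀, hδ₀, by rwa [fragIter_omega0]⟩) h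
  exact ⟨δ, hδ, hδc, by rwa [fragIter_omega0] at hδS⟩

end Fragment

section DualBall

variable {X : Type*} [NormedAddCommGroup X] [NormedSpace ℝ X]

lemma dnorm_nonneg (f : WeakDual ℝ X) : 0 ≤ dnorm f := norm_nonneg _

lemma dnorm_smul (c : ℝ) (f : WeakDual ℝ X) : dnorm (c • f) = |c| * dnorm f := by
  simp only [dnorm, map_smul, norm_smul, Real.norm_eq_abs]

lemma dnorm_add_le (f g : WeakDual ℝ X) : dnorm (f + g) ≤ dnorm f + dnorm g := by
  simp only [dnorm, map_add]
  exact norm_add_le _ _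

lemma isCompact_dualBall : IsCompact (dualBall X) := by
  have h : dualBall X = WeakDual.toStrongDual ⁻¹' Metric.closedBall (0 : StrongDual ℝ X) 1 := by
    ext f
    simp [dualBall, dnorm]
  rw [h]
  exact WeakDual.isCompact_closedBall 0 1

lemma mem_smul_dualBall_iff {r : ℝ} (hr : 0 < r) {f : WeakDual ℝ X} :
    f ∈ r • dualBall X ↔ dnorm f ≤ r := by
  rw [mem_smul_set_iff_inv_smul_mem₀ hr.ne']
  simp only [dualBall, mem_ofPred_eq, dnorm_smul, abs_inv, abs_of_pos hr]
  rw [inv_mul_le_iff₀ hr, mul_one]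

/-- By the uniform boundedness principle. -/
lemma exists_forall_dnorm_le_of_isCompact [CompleteSpace X] {S : Set (WeakDual ℝ X)}
    (hS : IsCompact S) : ∃ M, 0 < M ∧ ∀ f ∈ S, dnorm f ≤ M := by
  have hpt : ∀ x : X, ∃ C, ∀ f : S, ‖WeakDual.toStrongDual f.1 x‖ ≤ C := fun x => by
    obtain ⟨r, hr⟩ := (hS.image (WeakDual.eval_continuous x)).isBounded.subset_closedBall 0
    exact ⟨r, fun f => by simpa [dist_zero_right] using hr ⟨f.1, f.2, rfl⟩⟩
  obtain ⟨C, hC⟩ := banach_steinhaus hpt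
  exact ⟨max C 1, by positivity, fun f hf => (hC ⟨f, hf⟩).trans (le_max_left _ _)⟩

end DualBall

/-- The constant `2` in `le_two_mul` and `add_smul_dualBall_le` is the diameter of the unit
ball of `X*`, as for the Kuratowski measure. -/
structure IsHomogeneousMNC {X : Type*} [NormedAddCommGroup X] [NormedSpace ℝ X]
    (η : Set (WeakDual ℝ X) → ℝ) : Prop where
  nonneg : ∀ S, 0 ≤ η S
  le_two_mul : ∀ (S : Set (WeakDual ℝ X)) (M : ℝ), 0 ≤ M → (∀ f ∈ S, dnorm f ≤ M) →
    η S ≤ 2 * M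
  mono : ∀ {S T : Set (WeakDual ℝ X)}, S ⊆ T → IsCompact T → η S ≤ η T
  union_le : ∀ {S T : Set (WeakDual ℝ X)}, IsCompact S → IsCompact T →
    η (S ∪ T) ≤ max (η S) (η T)
  smul_le_of_ne_zero : ∀ {ν : ℝ}, ν ≠ 0 → ∀ {S : Set (WeakDual ℝ X)}, IsCompact S →
    η (ν • S) ≤ |ν| * η S
  add_smul_dualBall_le : ∀ {S : Set (WeakDual ℝ X)}, IsCompact S → ∀ {r : ℝ}, 0 < r →
    η (S + r • dualBall X) ≤ η S + 2 * r

namespace IsHomogeneousMNC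

variable {X : Type*} [NormedAddCommGroup X] [NormedSpace ℝ X] {η : Set (WeakDual ℝ X) → ℝ}
  (hη : IsHomogeneousMNC η) {ε : ℝ} {S T C D : Set (WeakDual ℝ X)}
include hη

lemma apply_empty : η ∅ = 0 :=
  le_antisymm (by simpa using hη.le_two_mul ∅ 0 le_rfl (by simp)) (hη.nonneg ∅)

lemma smul_eq {ν : ℝ} (hν : ν ≠ 0) (hS : IsCompact S) : η (ν • S) = |ν| * η S := by
  refine le_antisymm (hη.smul_le_of_ne_zero hν hS) ?_
  have h := hη.smul_le_of_ne_zero (inv_ne_zero hν) (hS.smul ν)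
  rw [inv_smul_smul₀ hν, abs_inv] at h
  exact (le_inv_mul_iff₀ (abs_pos.2 hν)).1 h

lemma smul_le (ν : ℝ) (hS : IsCompact S) : η (ν • S) ≤ |ν| * η S := by
  rcases eq_or_ne ν 0 with rfl | hν
  · refine (hη.le_two_mul _ 0 le_rfl ?_).trans (by simp)
    rintro _ ⟨f, -, rfl⟩
    simp [dnorm]
  · exact hη.smul_le_of_ne_zero hν hS

lemma biUnion_lt {ι : Type*} {F : Finset ι} {D : ι → Set (WeakDual ℝ X)} {c : ℝ} (hc : 0 < c)
    (hD : ∀ i ∈ F, IsCompact (D i)) (hDc : ∀ i ∈ F, η (D i) < c) : η (⋃ i ∈ F, D i) < c := by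
  classical
  induction F using Finset.induction_on with
  | empty => simpa [hη.apply_empty] using hc
  | insert i F _ ih =>
    simp only [Finset.mem_insert, forall_eq_or_imp] at hD hDc
    rw [Finset.set_biUnion_insert]
    exact (hη.union_le hD.1 (F.isCompact_biUnion hD.2)).trans_lt (max_lt hDc.1 (ih hD.2 hDc.2))

lemma lt_of_subset_biUnion {ι : Type*} {F : Finset ι} {D : ι → Set (WeakDual ℝ X)} {c : ℝ}
    (hc : 0 < c) (hD : ∀ i ∈ F, IsCompact (D i)) (hDc : ∀ i ∈ F, η (D i) < c)
    (hS : S ⊆ ⋃ i ∈ F, D i) : η S < c :=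
  (hη.mono hS (F.isCompact_biUnion hD)).trans_lt (hη.biUnion_lt hc hD hDc)

lemma frag_mono {ε₁ ε₂ : ℝ} (hST : S ⊆ T) (hT : IsCompact T) (hε : ε₁ ≤ ε₂) :
    frag η ε₂ S ⊆ frag η ε₁ T := fun _ ⟨hxS, hx⟩ =>
  ⟨hST hxS, fun U hU =>
    hε.trans ((hx U hU).trans (hη.mono (inter_subset_inter_left _ hST)
      (hT.inter_right isClosed_closure)))⟩

lemma frag_union (hC : IsCompact C) (hD : IsCompact D) (hε : 0 < ε) :
    frag η ε (C ∪ D) ⊆ frag η ε C ∪ frag η ε D := by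
  intro x hx
  by_contra hxCD
  rw [mem_union, not_or] at hxCD
  obtain ⟨U, hU, hUC⟩ := exists_nhds_lt_of_notMem_frag hC.isClosed (hη.apply_empty ▸ hε) hxCD.1
  obtain ⟨V, hV, hVD⟩ := exists_nhds_lt_of_notMem_frag hD.isClosed (hη.apply_empty ▸ hε) hxCD.2
  have hsub : (C ∪ D) ∩ closure (U ∩ V) ⊆ (C ∩ closure U) ∪ (D ∩ closure V) :=
    fun y ⟨hy, hyUV⟩ => hy.imp (fun hyC => ⟨hyC, closure_mono inter_subset_left hyUV⟩)
      (fun hyD => ⟨hyD, closure_mono inter_subset_right hyUV⟩)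
  have hCU := hC.inter_right (isClosed_closure (s := U))
  have hDV := hD.inter_right (isClosed_closure (s := V))
  refine (hx.2 _ (inter_mem hU hV)).not_gt ?_
  calc η ((C ∪ D) ∩ closure (U ∩ V)) ≤ η ((C ∩ closure U) ∪ (D ∩ closure V)) :=
        hη.mono hsub (hCU.union hDV)
    _ ≤ max (η (C ∩ closure U)) (η (D ∩ closure V)) := hη.union_le hCU hDV
    _ < ε := max_lt hUC hVD

lemma smul_mem_frag_iff {ν : ℝ} (hν : ν ≠ 0) (hS : IsCompact S) {f : WeakDual ℝ X} :
    ν • f ∈ frag η (|ν| * ε) (ν • S) ↔ f ∈ frag η ε S := by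
  have key : ∀ V : Set (WeakDual ℝ X), η (ν • S ∩ closure (ν • V)) = |ν| * η (S ∩ closure V) :=
    fun V => by
      rw [closure_smul₀, ← smul_set_inter₀ hν, hη.smul_eq hν (hS.inter_right isClosed_closure)]
  simp only [frag, mem_ofPred_eq, smul_mem_smul_set_iff₀ hν]
  refine and_congr_right fun _ => ⟨fun h V hV => ?_, fun h U hU => ?_⟩
  · have hle := h _ ((smul_mem_nhds_smul_iff₀ hν).2 hV)
    rw [key] at hle
    exact le_of_mul_le_mul_left hle (abs_pos.2 hν)
  · have hU' : ν⁻¹ • U ∈ 𝓝 f := by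
      rwa [← smul_mem_nhds_smul_iff₀ hν, smul_inv_smul₀ hν]
    rw [← smul_inv_smul₀ hν U, key]
    exact mul_le_mul_of_nonneg_left (h _ hU') (abs_nonneg ν)

lemma frag_smul {ν : ℝ} (hν : ν ≠ 0) (hS : IsCompact S) :
    frag η (|ν| * ε) (ν • S) = ν • frag η ε S := by
  ext f
  rw [mem_smul_set_iff_inv_smul_mem₀ hν, ← hη.smul_mem_frag_iff hν hS, smul_inv_smul₀ hν]

lemma exists_nhds_image_inter_closure_lt {P : Type*} [TopologicalSpace P]
    {Φ : P → WeakDual ℝ X} (hΦ : Continuous Φ) {K : Set P} (hK : IsCompact K)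
    {x : WeakDual ℝ X} {c : ℝ} (hc : 0 < c)
    (h : ∀ p ∈ K, Φ p = x → ∃ W ∈ 𝓝 p, ∃ D, IsCompact D ∧ η D < c ∧ Φ '' (K ∩ W) ⊆ D) :
    ∃ U ∈ 𝓝 x, η (Φ '' K ∩ closure U) < c := by
  choose! W hW D hD hDc hWD using h
  obtain ⟨F, hF, hcover⟩ := (hK.inter_right (isClosed_singleton.preimage hΦ)).elim_nhds_subcover
    (fun p => interior (W p)) fun p hp => interior_mem_nhds.2 (hW p hp.1 hp.2)
  set O := ⋃ p ∈ F, interior (W p)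
  have hxO : x ∉ Φ '' (K \ O) := fun ⟨p, ⟨hpK, hpO⟩, hpx⟩ => hpO (hcover ⟨hpK, hpx⟩)
  have hKO : IsCompact (Φ '' (K \ O)) :=
    (hK.diff (isOpen_biUnion fun _ _ => isOpen_interior)).image hΦ
  obtain ⟨U, hU, hUc, hUO⟩ :=
    exists_mem_nhds_isClosed_subset (hKO.isClosed.isOpen_compl.mem_nhds hxO)
  refine ⟨U, hU, hη.lt_of_subset_biUnion hc (fun p hp => hD p (hF p hp).1 (hF p hp).2)
    (fun p hp => hDc p (hF p hp).1 (hF p hp).2) ?_⟩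
  rintro _ ⟨⟨p, hpK, rfl⟩, hpU⟩
  rw [hUc.closure_eq] at hpU
  have hpO : p ∈ O := by_contra fun hpO => hUO hpU ⟨p, ⟨hpK, hpO⟩, rfl⟩
  obtain ⟨q, hqF, hpq⟩ := mem_iUnion₂.1 hpO
  exact mem_iUnion₂.2 ⟨q, hqF, hWD q (hF q hqF).1 (hF q hqF).2 ⟨p, ⟨hpK, interior_subset hpq⟩, rfl⟩⟩

lemma frag_add_smul_dualBall_subset (hS : IsCompact S) {r : ℝ} (hr : 0 < r) (hε : 0 < ε) :
    frag η (ε + 2 * r) (S + r • dualBall X) ⊆ frag η ε S + r • dualBall X := by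
  intro x hx
  by_contra hx'
  have hB : IsCompact (r • dualBall X) := isCompact_dualBall.smul r
  have hfib : ∀ p ∈ S ×ˢ (r • dualBall X), p.1 + p.2 = x → ∃ W ∈ 𝓝 p, ∃ D, IsCompact D ∧
      η D < ε + 2 * r ∧ (fun p => p.1 + p.2) '' ((S ×ˢ (r • dualBall X)) ∩ W) ⊆ D := by
    rintro ⟨s, w⟩ ⟨hs, hw⟩ rfl
    obtain ⟨V, hV, hVlt⟩ :=
      exists_nhds_lt_of_mem_of_notMem_frag hs fun hs' => hx' (add_mem_add hs' hw)
    have hSV := hS.inter_right (isClosed_closure (s := V))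
    refine ⟨V ×ˢ univ, prod_mem_nhds hV univ_mem, (S ∩ closure V) + r • dualBall X,
      hSV.add hB, ?_, ?_⟩
    · linarith [hη.add_smul_dualBall_le hSV hr]
    · rintro _ ⟨⟨s', w'⟩, ⟨⟨hs', hw'⟩, hs'V, -⟩, rfl⟩
      exact add_mem_add ⟨hs', subset_closure hs'V⟩ hw'
  obtain ⟨U, hU, hlt⟩ :=
    hη.exists_nhds_image_inter_closure_lt continuous_add (hS.prod hB) (by positivity) hfib
  rw [add_image_prod] at hlt
  exact (hx.2 U hU).not_gt hlt

lemma iterate_frag_mono {ε₁ ε₂ : ℝ} (hST : S ⊆ T) (hT : IsCompact T) (hε : ε₁ ≤ ε₂) (k : ℕ) :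
    (frag η ε₂)^[k] S ⊆ (frag η ε₁)^[k] T := by
  induction k with
  | zero => exact hST
  | succ k ih =>
    simp only [Function.iterate_succ_apply']
    exact hη.frag_mono ih (isCompact_iterate_frag hT k) hε

lemma iterate_frag_union (hC : IsCompact C) (hD : IsCompact D) (hε : 0 < ε) (k : ℕ) :
    (frag η ε)^[k] (C ∪ D) ⊆ (frag η ε)^[k] C ∪ (frag η ε)^[k] D := by
  induction k with
  | zero => exact subset_rfl
  | succ k ih =>
    have hCk := isCompact_iterate_frag (η := η) (ε := ε) hC k
    have hDk := isCompact_iterate_frag (η := η) (ε := ε) hD k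
    simp only [Function.iterate_succ_apply']
    exact (hη.frag_mono ih (hCk.union hDk) le_rfl).trans (hη.frag_union hCk hDk hε)

lemma iterate_frag_smul {ν : ℝ} (hν : ν ≠ 0) (hS : IsCompact S) (k : ℕ) :
    (frag η (|ν| * ε))^[k] (ν • S) = ν • (frag η ε)^[k] S := by
  induction k with
  | zero => rfl
  | succ k ih =>
    simp only [Function.iterate_succ_apply']
    rw [ih, hη.frag_smul hν (isCompact_iterate_frag hS k)]

lemma iterate_frag_add_smul_dualBall_subset (hS : IsCompact S) {r : ℝ} (hr : 0 < r)
    (hε : 0 < ε) (k : ℕ) :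
    (frag η (ε + 2 * r))^[k] (S + r • dualBall X) ⊆ (frag η ε)^[k] S + r • dualBall X := by
  induction k with
  | zero => exact subset_rfl
  | succ k ih =>
    have hSk := isCompact_iterate_frag (η := η) (ε := ε) hS k
    simp only [Function.iterate_succ_apply']
    exact (hη.frag_mono ih (hSk.add (isCompact_dualBall.smul r)) le_rfl).trans
      (hη.frag_add_smul_dualBall_subset hSk hr hε)

lemma fragOmega_mono {ε₁ ε₂ : ℝ} (hST : S ⊆ T) (hT : IsCompact T) (hε : ε₁ ≤ ε₂) :
    fragOmega η ε₂ S ⊆ fragOmega η ε₁ T :=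
  iInter_mono fun k => hη.iterate_frag_mono hST hT hε k

lemma fragOmega_union (hC : IsCompact C) (hD : IsCompact D) (hε : 0 < ε) :
    fragOmega η ε (C ∪ D) ⊆ fragOmega η ε C ∪ fragOmega η ε D := by
  intro x hx
  by_cases hxC : x ∈ fragOmega η ε C
  · exact Or.inl hxC
  obtain ⟨k₀, hk₀⟩ : ∃ k₀, x ∉ (frag η ε)^[k₀] C := by simpa [fragOmega] using hxC
  refine Or.inr (mem_iInter.2 fun k => ?_)
  rcases hη.iterate_frag_union hC hD hε (max k k₀) (mem_iInter.1 hx _) with h | h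
  · exact absurd (iterate_frag_antitone η ε C (le_max_right k k₀) h) hk₀
  · exact iterate_frag_antitone η ε D (le_max_left k k₀) h

lemma fragOmega_smul {ν : ℝ} (hν : ν ≠ 0) (hS : IsCompact S) :
    fragOmega η (|ν| * ε) (ν • S) = ν • fragOmega η ε S := by
  ext f
  simp only [fragOmega, mem_iInter, hη.iterate_frag_smul hν hS, mem_smul_set_iff_inv_smul_mem₀ hν]

/-- Cantor's intersection theorem lets the thickening pass to the intersection over `k`. -/
lemma fragOmega_add_smul_dualBall_subset (hS : IsCompact S) {r : ℝ} (hr : 0 < r)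
    (hε : 0 < ε) :
    fragOmega η (ε + 2 * r) (S + r • dualBall X) ⊆ fragOmega η ε S + r • dualBall X := by
  intro x hx
  have hB : IsClosed (r • dualBall X) := (isCompact_dualBall.smul r).isClosed
  set C : ℕ → Set (WeakDual ℝ X) := fun k => (frag η ε)^[k] S ∩ (x - ·) ⁻¹' (r • dualBall X)
  have hCcl : ∀ k, IsClosed (C k) := fun k =>
    (isClosed_iterate_frag hS.isClosed k).inter (hB.preimage (continuous_sub_left x))
  have hCne : ∀ k, (C k).Nonempty := fun k => by
    obtain ⟨z, hz, w, hw, rfl⟩ :=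
      hη.iterate_frag_add_smul_dualBall_subset hS hr hε k (mem_iInter.1 hx k)
    exact ⟨z, hz, by simpa using hw⟩
  obtain ⟨z, hz⟩ := IsCompact.nonempty_iInter_of_sequence_nonempty_isCompact_isClosed C
    (fun k => inter_subset_inter_left _ (iterate_frag_antitone η ε S k.le_succ)) hCne
    (hS.of_isClosed_subset (hCcl 0) inter_subset_left) hCcl
  exact ⟨z, mem_iInter.2 fun k => (mem_iInter.1 hz k).1, x - z, (mem_iInter.1 hz 0).2,
    add_sub_cancel z x⟩

lemma fragOmega_eq_empty_of_forall_dnorm_le {M : ℝ} (hM : 0 ≤ M)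
    (hS : ∀ f ∈ S, dnorm f ≤ M) (hε : 2 * M < ε) : fragOmega η ε S = ∅ := by
  have h : frag η ε S = ∅ := eq_empty_of_forall_notMem fun x hx => by
    have := hx.2 univ univ_mem
    rw [closure_univ, inter_univ] at this
    linarith [hη.le_two_mul S M hM hS]
  exact subset_empty_iff.1 ((iInter_subset _ 1).trans h.subset)

lemma exists_fragOmega_eq_empty [CompleteSpace X] (hS : IsCompact S) :
    ∃ δ, 0 < δ ∧ fragOmega η δ S = ∅ := by
  obtain ⟨M, hM, hSM⟩ := exists_forall_dnorm_le_of_isCompact hS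
  exact ⟨2 * M + 1, by positivity, hη.fragOmega_eq_empty_of_forall_dnorm_le hM.le hSM (by linarith)⟩

lemma exists_fragOmega_eq_empty_lt [CompleteSpace X] (hS : IsCompact S) {c : ℝ}
    (h : etaOmega η S < c) : ∃ δ, 0 < δ ∧ δ < c ∧ fragOmega η δ S = ∅ :=
  exists_fragOmega_eq_empty_of_etaOmega_lt (hη.exists_fragOmega_eq_empty hS) h

protected lemma etaOmega [CompleteSpace X] : IsHomogeneousMNC (etaOmega η) where
  nonneg _ := Real.sInf_nonneg fun _ hδ => hδ.1.le
  le_two_mul S M hM hS := le_of_forall_gt_imp_ge_of_dense fun c hc =>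
    etaOmega_le (by linarith) (hη.fragOmega_eq_empty_of_forall_dnorm_le hM hS hc)
  mono {S T} hST hT := le_of_forall_gt_imp_ge_of_dense fun c hc => by
    obtain ⟨δ, hδ, hδc, hTδ⟩ := hη.exists_fragOmega_eq_empty_lt hT hc
    exact (etaOmega_le hδ (subset_empty_iff.1 (hTδ ▸ hη.fragOmega_mono hST hT le_rfl))).trans hδc.le
  union_le {S T} hS hT := le_of_forall_gt_imp_ge_of_dense fun c hc => by
    obtain ⟨δ₁, hδ₁, hδ₁c, hSδ⟩ :=
      hη.exists_fragOmega_eq_empty_lt hS ((le_max_left _ _).trans_lt hc)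
    obtain ⟨δ₂, -, hδ₂c, hTδ⟩ :=
      hη.exists_fragOmega_eq_empty_lt hT ((le_max_right _ _).trans_lt hc)
    have hδ := hδ₁.trans_le (le_max_left δ₁ δ₂)
    have hS' : fragOmega η (max δ₁ δ₂) S = ∅ :=
      subset_empty_iff.1 (hSδ ▸ hη.fragOmega_mono subset_rfl hS (le_max_left δ₁ δ₂))
    have hT' : fragOmega η (max δ₁ δ₂) T = ∅ :=
      subset_empty_iff.1 (hTδ ▸ hη.fragOmega_mono subset_rfl hT (le_max_right δ₁ δ₂))
    refine (etaOmega_le hδ (subset_empty_iff.1 ?_)).trans (max_lt hδ₁c hδ₂c).le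
    simpa [hS', hT'] using hη.fragOmega_union hS hT hδ
  smul_le_of_ne_zero {ν} hν S hS := le_of_forall_gt_imp_ge_of_dense fun c hc => by
    have hν' := abs_pos.2 hν
    obtain ⟨δ, hδ, hδc, hSδ⟩ :=
      hη.exists_fragOmega_eq_empty_lt hS ((lt_div_iff₀' hν').2 hc)
    have h := hη.fragOmega_smul hν hS (ε := δ)
    rw [hSδ, smul_set_empty] at h
    exact (etaOmega_le (by positivity) h).trans ((lt_div_iff₀' hν').1 hδc).le
  add_smul_dualBall_le {S} hS r hr := by
    suffices etaOmega η (S + r • dualBall X) - 2 * r ≤ etaOmega η S by linarith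
    refine le_of_forall_gt_imp_ge_of_dense fun c hc => ?_
    obtain ⟨δ, hδ, hδc, hSδ⟩ := hη.exists_fragOmega_eq_empty_lt hS hc
    have h := hη.fragOmega_add_smul_dualBall_subset hS hr hδ
    rw [hSδ, empty_add, subset_empty_iff] at h
    linarith [etaOmega_le (by positivity) h]

end IsHomogeneousMNC

section Kuratowski

variable {X : Type*} [NormedAddCommGroup X] [NormedSpace ℝ X] {S T : Set (WeakDual ℝ X)}
  {ε : ℝ}

def kurSet (S : Set (WeakDual ℝ X)) : Set ℝ :=
  {ε | 0 < ε ∧ ∃ F : Finset (WeakDual ℝ X), S ⊆ ⋃ c ∈ F, {f | dnorm (f - c) ≤ ε / 2}}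

lemma kur_le (h : ε ∈ kurSet S) : kur S ≤ ε :=
  csInf_le ⟨0, fun _ hδ => hδ.1.le⟩ h

lemma mem_kurSet_of_le {δ : ℝ} (h : δ ∈ kurSet S) (hδ : δ ≤ ε) : ε ∈ kurSet S := by
  obtain ⟨hδ0, F, hF⟩ := h
  exact ⟨hδ0.trans_le hδ, F, hF.trans (iUnion₂_mono fun c _ f hf => by
    simp only [mem_ofPred_eq] at hf ⊢
    linarith)⟩

lemma mem_kurSet_of_forall_dnorm_le {M : ℝ} (hS : ∀ f ∈ S, dnorm f ≤ M) (hε : 0 < ε)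
    (hM : 2 * M ≤ ε) : ε ∈ kurSet S :=
  ⟨hε, {0}, fun f hf => by simpa using (hS f hf).trans (by linarith)⟩

lemma exists_mem_kurSet_lt [CompleteSpace X] (hS : IsCompact S) {c : ℝ} (h : kur S < c) :
    ∃ δ ∈ kurSet S, δ < c := by
  obtain ⟨M, hM, hSM⟩ := exists_forall_dnorm_le_of_isCompact hS
  exact exists_lt_of_csInf_lt
    ⟨2 * M + 1, mem_kurSet_of_forall_dnorm_le hSM (by positivity) (by linarith)⟩ h

lemma isHomogeneousMNC_kur [CompleteSpace X] : IsHomogeneousMNC (kur (X := X)) where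
  nonneg _ := Real.sInf_nonneg fun _ hδ => hδ.1.le
  le_two_mul S M hM hS := le_of_forall_gt_imp_ge_of_dense fun c hc =>
    kur_le (mem_kurSet_of_forall_dnorm_le hS (by linarith) hc.le)
  mono {S T} hST hT := le_of_forall_gt_imp_ge_of_dense fun c hc => by
    obtain ⟨δ, ⟨hδ, F, hF⟩, hδc⟩ := exists_mem_kurSet_lt hT hc
    exact (kur_le ⟨hδ, F, hST.trans hF⟩).trans hδc.le
  union_le {S T} hS hT := le_of_forall_gt_imp_ge_of_dense fun c hc => by
    classical
    obtain ⟨δ₁, hδ₁, hδ₁c⟩ := exists_mem_kurSet_lt hS ((le_max_left _ _).trans_lt hc)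
    obtain ⟨δ₂, hδ₂, hδ₂c⟩ := exists_mem_kurSet_lt hT ((le_max_right _ _).trans_lt hc)
    obtain ⟨hδ, F, hF⟩ := mem_kurSet_of_le hδ₁ (le_max_left δ₁ δ₂)
    obtain ⟨-, G, hG⟩ := mem_kurSet_of_le hδ₂ (le_max_right δ₁ δ₂)
    refine (kur_le ⟨hδ, F ∪ G, union_subset (hF.trans ?_) (hG.trans ?_)⟩).trans
      (max_lt hδ₁c hδ₂c).le
    · exact biUnion_mono (fun c hc => Finset.mem_union_left G hc) fun _ _ => subset_rfl
    · exact biUnion_mono (fun c hc => Finset.mem_union_right F hc) fun _ _ => subset_rfl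
  smul_le_of_ne_zero {ν} hν S hS := le_of_forall_gt_imp_ge_of_dense fun c hc => by
    classical
    have hν' := abs_pos.2 hν
    obtain ⟨δ, ⟨hδ, F, hF⟩, hδc⟩ := exists_mem_kurSet_lt hS ((lt_div_iff₀' hν').2 hc)
    refine (kur_le ⟨by positivity, F.image (ν • ·), ?_⟩).trans ((lt_div_iff₀' hν').1 hδc).le
    rintro _ ⟨f, hf, rfl⟩
    obtain ⟨g, hg, hfg⟩ := mem_iUnion₂.1 (hF hf)
    refine mem_iUnion₂.2 ⟨ν • g, Finset.mem_image_of_mem _ hg, ?_⟩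
    simp only [mem_ofPred_eq] at hfg ⊢
    rw [← smul_sub, dnorm_smul, mul_div_assoc]
    exact mul_le_mul_of_nonneg_left hfg hν'.le
  add_smul_dualBall_le {S} hS r hr := by
    suffices kur (S + r • dualBall X) - 2 * r ≤ kur S by linarith
    refine le_of_forall_gt_imp_ge_of_dense fun c hc => ?_
    obtain ⟨δ, ⟨hδ, F, hF⟩, hδc⟩ := exists_mem_kurSet_lt hS hc
    suffices δ + 2 * r ∈ kurSet (S + r • dualBall X) by linarith [kur_le this]
    refine ⟨by positivity, F, ?_⟩
    rintro _ ⟨f, hf, w, hw, rfl⟩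
    obtain ⟨g, hg, hfg⟩ := mem_iUnion₂.1 (hF hf)
    refine mem_iUnion₂.2 ⟨g, hg, ?_⟩
    simp only [mem_ofPred_eq] at hfg ⊢
    rw [add_sub_right_comm]
    linarith [dnorm_add_le (f - g) w, (mem_smul_dualBall_iff hr).1 hw]

lemma isHomogeneousMNC_omegaPow [CompleteSpace X] (n : ℕ) :
    IsHomogeneousMNC (omegaPow (kur (X := X)) n) := by
  induction n with
  | zero => exact isHomogeneousMNC_kur
  | succ n ih => exact ih.etaOmega

end Kuratowski

lemma inv_one_sub_pow_le_two {c : ℝ} {j : ℕ} (hc : c ≤ 2) (hjc : j * c ≤ 1 / 2) :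
    (1 - c)⁻¹ ^ j ≤ 2 := by
  have hbern := one_add_mul_le_pow (by linarith : (-2 : ℝ) ≤ -c) j
  have h : 1 / 2 ≤ (1 - c) ^ j := by
    rw [← sub_eq_add_neg] at hbern
    linarith
  rw [inv_pow, inv_le_comm₀ (by linarith) two_pos]
  linarith

lemma balanced_closedBall_smul {E : Type*} [AddCommGroup E] [Module ℝ E] (t : ℝ) (S : Set E) :
    Balanced ℝ (Metric.closedBall (0 : ℝ) t • S) := by
  rw [balanced_iff_smul_mem]
  rintro a ha _ ⟨ν, hν, b, hb, rfl⟩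
  refine ⟨a * ν, ?_, b, hb, mul_smul a ν b⟩
  rw [mem_closedBall_zero_iff] at hν ⊢
  rw [norm_mul]
  exact (mul_le_of_le_one_left (norm_nonneg ν) ha).trans hν

section ScaledFragUnion

variable {X : Type*} [NormedAddCommGroup X] [NormedSpace ℝ X] {η : Set (WeakDual ℝ X) → ℝ}
  {ε t : ℝ} {A : Set (WeakDual ℝ X)} {m : ℕ}

def scaledFragUnion (η : Set (WeakDual ℝ X) → ℝ) (ε t : ℝ) (A : Set (WeakDual ℝ X)) (m : ℕ) :
    Set (WeakDual ℝ X) :=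
  ⋃ j ∈ Finset.range m, Metric.closedBall (0 : ℝ) (t ^ j) • (frag η ε)^[j] A

lemma closedBall_smul_subset_scaledFragUnion (hm : (frag η ε)^[m] A = ∅) (j : ℕ) :
    Metric.closedBall (0 : ℝ) (t ^ j) • (frag η ε)^[j] A ⊆ scaledFragUnion η ε t A m := by
  rcases lt_or_ge j m with hj | hj
  · exact subset_biUnion_of_mem (u := fun j => Metric.closedBall (0 : ℝ) (t ^ j) • (frag η ε)^[j] A)
      (Finset.mem_range.2 hj)
  · have hj' : (frag η ε)^[j] A = ∅ := subset_empty_iff.1 (hm ▸ iterate_frag_antitone η ε A hj)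
    rw [hj', smul_empty]
    exact empty_subset _

lemma subset_scaledFragUnion (hm : (frag η ε)^[m] A = ∅) : A ⊆ scaledFragUnion η ε t A m :=
  fun a ha => closedBall_smul_subset_scaledFragUnion hm 0 ⟨1, by simp, a, ha, one_smul ℝ a⟩

lemma isCompact_scaledFragUnion (hA : IsCompact A) : IsCompact (scaledFragUnion η ε t A m) :=
  (Finset.range m).isCompact_biUnion fun j _ =>
    (isCompact_closedBall 0 _).smul_set (isCompact_iterate_frag hA j)

lemma balanced_scaledFragUnion : Balanced ℝ (scaledFragUnion η ε t A m) :=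
  balanced_iUnion₂ fun _ _ => balanced_closedBall_smul _ _

end ScaledFragUnion

namespace IsHomogeneousMNC

variable {X : Type*} [NormedAddCommGroup X] [NormedSpace ℝ X] [CompleteSpace X]
  {η : Set (WeakDual ℝ X) → ℝ} (hη : IsHomogeneousMNC η)
include hη

lemma exists_nhds_closedBall_smul_inter_closure_lt {S : Set (WeakDual ℝ X)} (hS : IsCompact S)
    {t ε c : ℝ} (ht : 0 ≤ t) (hε : 0 ≤ ε) (hc : t * ε < c) {x : WeakDual ℝ X}
    (hx : ∀ ν : ℝ, ‖ν‖ ≤ t → ∀ b ∈ S, ν • b = x → b ∉ frag η ε S) :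
    ∃ U ∈ 𝓝 x, η ((Metric.closedBall (0 : ℝ) t • S) ∩ closure U) < c := by
  obtain ⟨M, hM, hSM⟩ := exists_forall_dnorm_le_of_isCompact hS
  set δ := (c - t * ε) / (4 * M)
  have hδ : 0 < δ := div_pos (by linarith) (by positivity)
  have hδM : δ * M = (c - t * ε) / 4 := by
    simp only [δ]
    field_simp
  have hK := (isCompact_closedBall (0 : ℝ) t).prod hS
  have hfib : ∀ p ∈ Metric.closedBall (0 : ℝ) t ×ˢ S, p.1 • p.2 = x → ∃ W ∈ 𝓝 p, ∃ D,
      IsCompact D ∧ η D < c ∧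
        (fun p => p.1 • p.2) '' ((Metric.closedBall (0 : ℝ) t ×ˢ S) ∩ W) ⊆ D := by
    rintro ⟨ν, b⟩ ⟨hν, hb⟩ rfl
    rw [mem_closedBall_zero_iff] at hν
    obtain ⟨V, hV, hVlt⟩ := exists_nhds_lt_of_mem_of_notMem_frag hb (hx ν hν b hb rfl)
    have hSV := hS.inter_right (isClosed_closure (s := V))
    refine ⟨Metric.ball ν δ ×ˢ V, prod_mem_nhds (Metric.ball_mem_nhds ν hδ) hV,
      ν • (S ∩ closure V) + (δ * M) • dualBall X, (hSV.smul ν).add (isCompact_dualBall.smul _),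
      ?_, ?_⟩
    · have hνV : |ν| * η (S ∩ closure V) ≤ t * ε :=
        mul_le_mul hν hVlt.le (hη.nonneg _) ht
      linarith [hη.add_smul_dualBall_le (hSV.smul ν) (by positivity : 0 < δ * M),
        hη.smul_le ν hSV]
    · rintro _ ⟨⟨μ, b'⟩, ⟨⟨-, hb'⟩, hμ, hb'V⟩, rfl⟩
      have hsplit : μ • b' = ν • b' + (μ - ν) • b' := by rw [← add_smul, add_sub_cancel]
      show μ • b' ∈ _
      rw [hsplit]
      refine add_mem_add (smul_mem_smul_set ⟨hb', subset_closure hb'V⟩)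
        ((mem_smul_dualBall_iff (by positivity)).2 ?_)
      rw [dnorm_smul, ← Real.dist_eq]
      exact mul_le_mul (Metric.mem_ball.1 hμ).le (hSM b' hb') (dnorm_nonneg _) hδ.le
  rw [← image_smul_prod]
  exact hη.exists_nhds_image_inter_closure_lt continuous_smul hK (by nlinarith) hfib

lemma frag_scaledFragUnion_subset {A : Set (WeakDual ℝ X)} (hA : IsCompact A) {m : ℕ} {ε c : ℝ}
    (hε : 0 < ε) (hc0 : 0 ≤ c) (hc1 : c < 1) (hmc : m * c ≤ 1 / 2)
    (hm : (frag η ε)^[m] A = ∅) :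
    frag η (4 * ε) (scaledFragUnion η ε (1 - c)⁻¹ A m) ⊆
      (1 - c) • scaledFragUnion η ε (1 - c)⁻¹ A m := by
  have h1c : 0 < 1 - c := by linarith
  have hL : ∀ j, IsCompact (Metric.closedBall (0 : ℝ) ((1 - c)⁻¹ ^ j) • (frag η ε)^[j] A) :=
    fun j => (isCompact_closedBall 0 _).smul_set (isCompact_iterate_frag hA j)
  intro x hx
  by_contra hxB
  have hU : ∀ j ∈ Finset.range m, ∃ U ∈ 𝓝 x,
      η ((Metric.closedBall (0 : ℝ) ((1 - c)⁻¹ ^ j) • (frag η ε)^[j] A) ∩ closure U) < 4 * ε := by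
    intro j hj
    have hjc : (j : ℝ) * c ≤ 1 / 2 := (mul_le_mul_of_nonneg_right
      (by exact_mod_cast (Finset.mem_range.1 hj).le) hc0).trans hmc
    have htj := inv_one_sub_pow_le_two (by linarith) hjc
    refine hη.exists_nhds_closedBall_smul_inter_closure_lt (isCompact_iterate_frag hA j)
      (by positivity) hε.le (by nlinarith) ?_
    rintro ν hν b - rfl hb
    refine hxB ⟨((1 - c)⁻¹ * ν) • b, closedBall_smul_subset_scaledFragUnion hm (j + 1)
      ⟨(1 - c)⁻¹ * ν, ?_, b, ?_, rfl⟩, ?_⟩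
    · rw [mem_closedBall_zero_iff, norm_mul, norm_inv, Real.norm_of_nonneg h1c.le]
      exact (mul_le_mul_of_nonneg_left hν (inv_nonneg.2 h1c.le)).trans_eq (pow_succ' _ _).symm
    · rwa [Function.iterate_succ_apply']
    · show (1 - c) • ((1 - c)⁻¹ * ν) • b = ν • b
      rw [smul_smul, ← mul_assoc, mul_inv_cancel₀ h1c.ne', one_mul]
  choose! U hU hUlt using hU
  refine (hx.2 _ ((Finset.range m).iInter_mem_sets.2 hU)).not_gt
    (hη.lt_of_subset_biUnion (by positivity) (fun j _ => (hL j).inter_right isClosed_closure)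
      hUlt ?_)
  rintro y ⟨hyB, hyU⟩
  obtain ⟨j, hj, hyL⟩ := mem_iUnion₂.1 hyB
  exact mem_iUnion₂.2 ⟨j, hj, hyL, closure_mono (biInter_subset_of_mem hj) hyU⟩

theorem exists_balanced_superset {A : Set (WeakDual ℝ X)} (hA : IsCompact A) {m : ℕ} {ε : ℝ}
    (hε : 0 < ε) (hm : (frag η ε)^[m] A = ∅) :
    ∃ B : Set (WeakDual ℝ X), IsCompact B ∧ A ⊆ B ∧ Balanced ℝ B ∧
      frag η (4 * ε) B ⊆ (1 - 1 / (32 * ((m : ℝ) + 1))) • B := by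
  set c : ℝ := 1 / (32 * ((m : ℝ) + 1)) with hc
  have hm0 : (0 : ℝ) ≤ m := Nat.cast_nonneg m
  have hc1 : c < 1 := by
    rw [hc, div_lt_one (by positivity)]
    linarith
  have hmc : m * c ≤ 1 / 2 := by
    rw [hc, mul_one_div, div_le_div_iff₀ (by positivity) (by norm_num)]
    linarith
  exact ⟨_, isCompact_scaledFragUnion hA, subset_scaledFragUnion hm, balanced_scaledFragUnion,
    hη.frag_scaledFragUnion_subset hA hε (by positivity) hc1 hmc hm⟩

end IsHomogeneousMNC

theorem exists_radial_superset_general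
    {X : Type*} [NormedAddCommGroup X] [NormedSpace ℝ X] [CompleteSpace X]
    (A : Set (WeakDual ℝ X)) (hA : IsCompact A)
    (n m : ℕ) (ε : ℝ) (hε : 0 < ε)
    (h : fragIter (omegaPow (kur (X := X)) n) ε A (m : Ordinal.{0}) = ∅) :
    ∃ B : Set (WeakDual ℝ X), IsCompact B ∧ A ⊆ B ∧
      (∀ x ∈ B, -x ∈ B) ∧
      (∀ x ∈ B, ∀ l : ℝ, 0 ≤ l → l ≤ 1 → l • x ∈ B) ∧
      frag (omegaPow (kur (X := X)) n) (4 * ε) B ⊆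
        (1 - 1 / (32 * ((m : ℝ) + 1))) • B := by
  rw [fragIter_natCast] at h
  obtain ⟨B, hB, hAB, hBal, hfrag⟩ := (isHomogeneousMNC_omegaPow n).exists_balanced_superset hA hε h
  refine ⟨B, hB, hAB, fun x hx => hBal.neg_mem_iff.2 hx, fun x hx l hl0 hl1 => ?_, hfrag⟩
  exact hBal.smul_mem (by rwa [Real.norm_of_nonneg hl0]) hx

/-- If `X` is separable and `A ⊆ X*` is weak*-compact with
`[σ^{ω^n}]^m_ε(A) = ∅` (`n ≥ 0`, `m ≥ 1`), then there is a symmetric radial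
weak*-compact `B ⊇ A` with `[σ^{ω^n}]'_{4ε}(B) ⊆ (1 - 1/(32(m+1))) B`. -/
theorem exists_radial_superset
    {X : Type*} [NormedAddCommGroup X] [NormedSpace ℝ X] [CompleteSpace X]
    [TopologicalSpace.SeparableSpace X]
    (A : Set (WeakDual ℝ X)) (hA : IsCompact A)
    (n m : ℕ) (hm : 1 ≤ m) (ε : ℝ) (hε : 0 < ε)
    (h : fragIter (omegaPow (kur (X := X)) n) ε A (m : Ordinal.{0}) = ∅) :
    ∃ B : Set (WeakDual ℝ X), IsCompact B ∧ A ⊆ B ∧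
      (∀ x ∈ B, -x ∈ B) ∧
      (∀ x ∈ B, ∀ l : ℝ, 0 ≤ l → l ≤ 1 → l • x ∈ B) ∧
      frag (omegaPow (kur (X := X)) n) (4 * ε) B ⊆
        (1 - 1 / (32 * ((m : ℝ) + 1))) • B :=
  exists_radial_superset_general A hA n m ε hε h

end Szlenk
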